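/- arXiv:1903.02060 — 6 statements merged into one kernel-verified Lean document; each statement's English description precedes it below -/
import Mathlib

section
/- For every ε ∈ (0,1) and every real x ≥ −1, one has |(1+x)^{1+ε} − 1 − (1+ε)x| ≤ ε x². -/
/-- Lemma: for every `ε ∈ (0,1)` and every real `x ≥ -1`,
`|(1+x)^(1+ε) - 1 - (1+ε)x| ≤ ε x²`, where the power is the real power. -/
theorem abs_rpow_sub_one_sub_mul_le (ε x : ℝ) (hε : ε ∈ Set.Ioo (0 : ℝ) 1)
    (hx : (-1 : ℝ) ≤ x) :
    |(1 + x) ^ (1 + ε) - 1 - (1 + ε) * x| ≤ ε * x ^ 2 := by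
  obtain ⟨hε0, hε1⟩ := hε
  have h1x : (0 : ℝ) ≤ 1 + x := by linarith
  rw [abs_le]
  constructor
  · have := one_add_mul_self_le_rpow_one_add hx (by linarith : (1:ℝ) ≤ 1 + ε)
    nlinarith [sq_nonneg x]
  · have hb : (1 + x) ^ (ε : ℝ) ≤ 1 + ε * x :=
      rpow_one_add_le_one_add_mul_self hx hε0.le hε1.le
    have hsplit : (1 + x) ^ (1 + ε) = (1 + x) * (1 + x) ^ (ε : ℝ) := by
      rw [Real.rpow_add_of_nonneg h1x zero_le_one hε0.le, Real.rpow_one]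
    rw [hsplit]
    have : (1 + x) * (1 + x) ^ (ε : ℝ) ≤ (1 + x) * (1 + ε * x) :=
      mul_le_mul_of_nonneg_left hb h1x
    nlinarith
end

section
/- Let ψ : [0,∞) → [0,∞) be a nonincreasing function, and assume that there exist M > 0, γ > 0 and δ > 1 such that ψ(h) ≤ M ψ(k)^δ / (h − k)^γ for all h > k > 0. Then ψ(d) = 0, where d = M^{1/γ} ψ(0)^{(δ−1)/γ} 2^{δ/(δ−1)}. -/
/-!
Along the levels `k_n = d (1 - 2⁻ⁿ)`, whose gaps are `d 2^{-(n+1)}`, the recurrence propagates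
the bound `ψ k_n ≤ ψ 0 · (2⁻ⁿ)^θ` with `θ = γ / (δ - 1)`: the choice of `d`, i.e.
`d^γ = M ψ(0)^{δ-1} 2^{γ+θ}`, is exactly what makes the induction step close, using
`θ δ = θ + γ`. Since `k_n ≤ d` and `ψ` is nonincreasing, `ψ d` is below every term of a sequence
tending to `0`. The first step needs the recurrence at `k = 0`; it is obtained from `k ↓ 0`,
as `ψ k ≤ ψ 0` there.
-/

open Filter Topology

namespace Stampacchia

variable {ψ : ℝ → ℝ} {M γ δ : ℝ}

theorem le_of_rec_of_nonneg (hnonneg : ∀ t : ℝ, 0 ≤ t → 0 ≤ ψ t)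
    (hmono : ∀ s t : ℝ, 0 ≤ s → s ≤ t → ψ t ≤ ψ s) (hM : 0 ≤ M) (hδ : 0 ≤ δ)
    (hrec : ∀ h k : ℝ, 0 < k → k < h → ψ h ≤ M * ψ k ^ δ / (h - k) ^ γ)
    {h k : ℝ} (hk : 0 ≤ k) (hkh : k < h) : ψ h ≤ M * ψ k ^ δ / (h - k) ^ γ := by
  rcases hk.eq_or_lt with rfl | hk
  · have hbound : ∀ t ∈ Set.Ioo 0 h, ψ h ≤ M * ψ 0 ^ δ / (h - t) ^ γ := fun t ht =>
      (hrec h t ht.1 ht.2).trans <| by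
        have : 0 < h - t := by linarith [ht.2]
        gcongr
        · exact hnonneg t ht.1.le
        · exact hmono 0 t le_rfl ht.1.le
    have hcont : ContinuousAt (fun t => M * ψ 0 ^ δ / (h - t) ^ γ) 0 := by
      have hpow : ContinuousAt (fun t => (h - t) ^ γ) 0 :=
        (continuousAt_const.sub continuousAt_id).rpow_const (Or.inl (by simpa using hkh.ne'))
      exact continuousAt_const.div hpow (by simpa using (Real.rpow_pos_of_pos hkh γ).ne')
    exact ge_of_tendsto (hcont.tendsto.mono_left nhdsWithin_le_nhds) <|
      eventually_of_mem (Ioo_mem_nhdsGT hkh) hbound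
  · exact hrec h k hk hkh

theorem rec_step_le {A d θ ε x : ℝ} (hM : 0 ≤ M) (hA : 0 ≤ A) (hd : 0 < d) (hε : 0 < ε)
    (hδ : 0 < δ) (hθδ : θ * δ = θ + γ) (hdγ : d ^ γ = M * A ^ (δ - 1) * 2 ^ (γ + θ))
    (hx₀ : 0 ≤ x) (hx : x ≤ A * ε ^ θ) :
    M * x ^ δ / (d * ε / 2) ^ γ ≤ A * (ε / 2) ^ θ := by
  rw [div_le_iff₀ (by positivity)]
  calc M * x ^ δ ≤ M * (A * ε ^ θ) ^ δ := by gcongr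
    _ = A * (ε / 2) ^ θ * (d * ε / 2) ^ γ := by
      have hA' : A ^ δ = A * A ^ (δ - 1) := by
        rw [← Real.rpow_one_add' hA (by linarith)]; ring_nf
      rw [Real.mul_rpow hA (by positivity), ← Real.rpow_mul hε.le, hθδ, Real.rpow_add hε,
        Real.div_rpow hε.le zero_le_two, Real.div_rpow (by positivity) zero_le_two,
        Real.mul_rpow hd.le hε.le, hdγ, Real.rpow_add zero_lt_two, hA']
      field_simp

theorem le_rpow_geometric {A d θ : ℝ} (hnonneg : ∀ t : ℝ, 0 ≤ t → 0 ≤ ψ t) (hM : 0 ≤ M)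
    (hrec : ∀ h k : ℝ, 0 ≤ k → k < h → ψ h ≤ M * ψ k ^ δ / (h - k) ^ γ)
    (hδ : 0 < δ) (hθδ : θ * δ = θ + γ) (hA : ψ 0 = A) (hd : 0 < d)
    (hdγ : d ^ γ = M * A ^ (δ - 1) * 2 ^ (γ + θ)) (n : ℕ) :
    ψ (d * (1 - 2⁻¹ ^ n)) ≤ A * (2⁻¹ ^ n) ^ θ := by
  induction n with
  | zero => simp [hA]
  | succ n ih =>
    set ε : ℝ := 2⁻¹ ^ n
    have hε : 0 < ε := by positivity
    have hε₁ : ε ≤ 1 := pow_le_one₀ (by norm_num) (by norm_num)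
    have hk : 0 ≤ d * (1 - ε) := mul_nonneg hd.le (by linarith)
    rw [pow_succ, ← div_eq_mul_inv]
    have hstep : d * (1 - ε / 2) - d * (1 - ε) = d * ε / 2 := by ring
    calc ψ (d * (1 - ε / 2)) ≤ M * ψ (d * (1 - ε)) ^ δ / (d * ε / 2) ^ γ :=
          hstep ▸ hrec _ _ hk (by nlinarith)
      _ ≤ A * (ε / 2) ^ θ :=
        rec_step_le hM (hA ▸ hnonneg 0 le_rfl) hd hε hδ hθδ hdγ (hnonneg _ hk) ih

theorem eq_zero_of_rpow_eq {A d θ : ℝ} (hnonneg : ∀ t : ℝ, 0 ≤ t → 0 ≤ ψ t)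
    (hmono : ∀ s t : ℝ, 0 ≤ s → s ≤ t → ψ t ≤ ψ s) (hM : 0 ≤ M)
    (hrec : ∀ h k : ℝ, 0 ≤ k → k < h → ψ h ≤ M * ψ k ^ δ / (h - k) ^ γ)
    (hδ : 0 < δ) (hθ : 0 < θ) (hθδ : θ * δ = θ + γ) (hA : ψ 0 = A) (hd : 0 < d)
    (hdγ : d ^ γ = M * A ^ (δ - 1) * 2 ^ (γ + θ)) : ψ d = 0 := by
  have hbound (n : ℕ) : ψ d ≤ A * (2⁻¹ ^ n) ^ θ := by
    have hε : (0 : ℝ) < 2⁻¹ ^ n := by positivity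
    refine (hmono _ d ?_ ?_).trans (le_rpow_geometric hnonneg hM hrec hδ hθδ hA hd hdγ n)
    · exact mul_nonneg hd.le (sub_nonneg.2 (pow_le_one₀ (by norm_num) (by norm_num)))
    · nlinarith
  have hlim : Tendsto (fun n : ℕ => A * ((2⁻¹ : ℝ) ^ n) ^ θ) atTop (𝓝 0) := by
    have h := ((Real.continuousAt_rpow_const 0 θ (Or.inr hθ.le)).tendsto.comp
      (tendsto_pow_atTop_nhds_zero_of_lt_one (by norm_num : (0 : ℝ) ≤ 2⁻¹)
        (by norm_num))).const_mul A
    simpa [Real.zero_rpow hθ.ne'] using h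
  exact le_antisymm (ge_of_tendsto' hlim hbound) (hnonneg d hd.le)

theorem rpow_threshold_eq {A : ℝ} (hM : 0 ≤ M) (hA : 0 ≤ A) (hγ : 0 < γ) (hδ : 1 < δ) :
    (M ^ (1 / γ) * A ^ ((δ - 1) / γ) * 2 ^ (δ / (δ - 1))) ^ γ
      = M * A ^ (δ - 1) * 2 ^ (γ + γ / (δ - 1)) := by
  rw [Real.mul_rpow (by positivity) (by positivity), Real.mul_rpow (by positivity) (by positivity),
    ← Real.rpow_mul hM, ← Real.rpow_mul hA, ← Real.rpow_mul zero_le_two,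
    one_div_mul_cancel hγ.ne', div_mul_cancel₀ _ hγ.ne', Real.rpow_one]
  congr 2
  field_simp [(sub_pos.2 hδ).ne']
  ring

end Stampacchia

open Stampacchia in
/-- Stampacchia's lemma: if `ψ : [0,∞) → [0,∞)` is nonincreasing and
`ψ(h) ≤ M ψ(k)^δ / (h − k)^γ` for all `h > k > 0`, with `M > 0`, `γ > 0`, `δ > 1`,
then `ψ(d) = 0` for `d = M^{1/γ} ψ(0)^{(δ−1)/γ} 2^{δ/(δ−1)}`. -/
theorem stampacchia (ψ : ℝ → ℝ) (hnonneg : ∀ t : ℝ, 0 ≤ t → 0 ≤ ψ t)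
    (hmono : ∀ s t : ℝ, 0 ≤ s → s ≤ t → ψ t ≤ ψ s)
    (M γ δ : ℝ) (hM : 0 < M) (hγ : 0 < γ) (hδ : 1 < δ)
    (hrec : ∀ h k : ℝ, 0 < k → k < h → ψ h ≤ M * ψ k ^ δ / (h - k) ^ γ) :
    ψ (M ^ (1 / γ) * ψ 0 ^ ((δ - 1) / γ) * 2 ^ (δ / (δ - 1))) = 0 := by
  have hA := hnonneg 0 le_rfl
  have hd₀ : 0 ≤ M ^ (1 / γ) * ψ 0 ^ ((δ - 1) / γ) * 2 ^ (δ / (δ - 1)) := by positivity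
  rcases hA.eq_or_lt with hA₀ | hA₀
  · exact le_antisymm (hA₀ ▸ hmono 0 _ le_rfl hd₀) (hnonneg _ hd₀)
  have hθδ : γ / (δ - 1) * δ = γ / (δ - 1) + γ := by
    field_simp [(sub_pos.2 hδ).ne']
    ring
  exact eq_zero_of_rpow_eq hnonneg hmono hM.le
    (fun h k => le_of_rec_of_nonneg hnonneg hmono hM.le (by linarith) hrec)
    (by linarith) (div_pos hγ (by linarith)) hθδ rfl (by positivity)
    (rpow_threshold_eq hM.le hA hγ hδ)
end

section
/- For every μ > 0, the function W(y) = −log(μ + √(μ² + |y|²)) on ℝ² satisfies −ΔW(y) = μ/(μ² + |y|²)^{3/2} for every y ∈ ℝ². -/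
open Real

/-!
`W` is radial: `W y = g ‖y‖²` with `g s = -log (μ + √(μ² + s))`, and on `ℝ²` the Laplacian of
`y ↦ g ‖y‖²` is `4 g'(s) + 4 s g''(s)`. Writing `r = √(μ² + s)`, one has
`g' = -1 / (2 r (μ + r))` and `g'' = (μ + 2 r) / (4 r³ (μ + r)²)`; substituting `s = r² - μ²`,
the sum collapses to `-μ / r³`.
-/

/-- The Laplacian of a function on `ℝ²`, defined as the sum of the second partial
derivatives in the coordinate directions. -/
noncomputable def lap (u : EuclideanSpace ℝ (Fin 2) → ℝ) (x : EuclideanSpace ℝ (Fin 2)) : ℝ :=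
  ∑ i : Fin 2,
    fderiv ℝ (fun y => fderiv ℝ u y (EuclideanSpace.single i 1)) x (EuclideanSpace.single i 1)

section RadialProfile

variable {E : Type*} [NormedAddCommGroup E] [InnerProductSpace ℝ E] {g : ℝ → ℝ}

theorem HasDerivAt.hasFDerivAt_comp_norm_sq {g' : ℝ} {y : E} (hg : HasDerivAt g g' (‖y‖ ^ 2)) :
    HasFDerivAt (fun z => g (‖z‖ ^ 2)) (g' • 2 • innerSL ℝ y) y :=
  hg.comp_hasFDerivAt y (hasStrictFDerivAt_norm_sq y).hasFDerivAt

theorem fderiv_comp_norm_sq_apply {g' : ℝ → ℝ} (hg : ∀ s, 0 ≤ s → HasDerivAt g (g' s) s)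
    (z v : E) :
    fderiv ℝ (fun z => g (‖z‖ ^ 2)) z v = 2 * g' (‖z‖ ^ 2) * inner ℝ z v := by
  rw [(hg _ (sq_nonneg _)).hasFDerivAt_comp_norm_sq.fderiv]
  simp only [smul_apply, innerSL_apply_apply, smul_eq_mul, nsmul_eq_mul]
  ring

theorem fderiv_fderiv_comp_norm_sq_apply {g' : ℝ → ℝ} {g'' : ℝ}
    (hg : ∀ s, 0 ≤ s → HasDerivAt g (g' s) s) (y v : E) (hg' : HasDerivAt g' g'' (‖y‖ ^ 2)) :
    fderiv ℝ (fun z => fderiv ℝ (fun z => g (‖z‖ ^ 2)) z v) y v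
      = 2 * g' (‖y‖ ^ 2) * ‖v‖ ^ 2 + 4 * g'' * inner ℝ y v ^ 2 := by
  have hprod : HasFDerivAt (fun z : E => 2 * g' (‖z‖ ^ 2) * inner ℝ z v)
      ((2 * g' (‖y‖ ^ 2)) • innerSL ℝ v + inner ℝ y v • (2 : ℝ) • g'' • 2 • innerSL ℝ y)
      y :=
    (hg'.hasFDerivAt_comp_norm_sq.const_mul 2).mul
      (by simpa [real_inner_comm] using (innerSL ℝ v).hasFDerivAt)
  simp_rw [fderiv_comp_norm_sq_apply hg _ v]
  rw [hprod.fderiv]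
  simp only [add_apply, smul_apply, innerSL_apply_apply, real_inner_self_eq_norm_sq, smul_eq_mul,
    nsmul_eq_mul]
  ring

end RadialProfile

theorem lap_comp_norm_sq {g g' : ℝ → ℝ} {g'' : ℝ} (hg : ∀ s, 0 ≤ s → HasDerivAt g (g' s) s)
    (y : EuclideanSpace ℝ (Fin 2)) (hg' : HasDerivAt g' g'' (‖y‖ ^ 2)) :
    lap (fun z => g (‖z‖ ^ 2)) y = 4 * g' (‖y‖ ^ 2) + 4 * ‖y‖ ^ 2 * g'' := by
  rw [lap, Fin.sum_univ_two, fderiv_fderiv_comp_norm_sq_apply hg y _ hg',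
    fderiv_fderiv_comp_norm_sq_apply hg y _ hg', EuclideanSpace.norm_sq_eq, Fin.sum_univ_two]
  simp only [PiLp.norm_single, norm_one, EuclideanSpace.inner_single_right, conj_trivial,
    norm_eq_abs, sq_abs]
  ring

section Profile

variable {μ s : ℝ}

theorem hasDerivAt_sqrt_const_add {c : ℝ} (hs : 0 < c + s) :
    HasDerivAt (fun s => √(c + s)) (1 / (2 * √(c + s))) s :=
  ((hasDerivAt_id' s).const_add c).sqrt hs.ne'

theorem hasDerivAt_neg_log_add_sqrt (hμ : 0 < μ) (hs : 0 < μ ^ 2 + s) :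
    HasDerivAt (fun s => -log (μ + √(μ ^ 2 + s)))
      (-1 / (2 * √(μ ^ 2 + s) * (μ + √(μ ^ 2 + s)))) s := by
  have hr : 0 < √(μ ^ 2 + s) := sqrt_pos.2 hs
  refine (((hasDerivAt_sqrt_const_add hs).const_add μ).log (by positivity)).neg.congr_deriv ?_
  field_simp

theorem hasDerivAt_neg_inv_sqrt_mul_add_sqrt (hμ : 0 < μ) (hs : 0 < μ ^ 2 + s) :
    HasDerivAt (fun s => -1 / (2 * √(μ ^ 2 + s) * (μ + √(μ ^ 2 + s))))
      ((μ + 2 * √(μ ^ 2 + s)) / (4 * √(μ ^ 2 + s) ^ 3 * (μ + √(μ ^ 2 + s)) ^ 2)) s := by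
  have hr : 0 < √(μ ^ 2 + s) := sqrt_pos.2 hs
  have hsqrt := hasDerivAt_sqrt_const_add hs
  have hden : HasDerivAt (fun s => 2 * √(μ ^ 2 + s) * (μ + √(μ ^ 2 + s))) _ s :=
    (hsqrt.const_mul 2).mul (hsqrt.const_add μ)
  refine ((hasDerivAt_const s (-1 : ℝ)).div hden (by positivity)).congr_deriv ?_
  field_simp
  ring

end Profile

/-- For every `μ > 0`, the function `W(y) = -log(μ + √(μ² + |y|²))` on `ℝ²` satisfies
`-ΔW(y) = μ/(μ² + |y|²)^{3/2}` for every `y ∈ ℝ²`. -/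
theorem neg_lap_W (μ : ℝ) (hμ : 0 < μ) :
    ∀ y : EuclideanSpace ℝ (Fin 2),
      -lap (fun z => -Real.log (μ + Real.sqrt (μ ^ 2 + ‖z‖ ^ 2))) y
        = μ / (μ ^ 2 + ‖y‖ ^ 2) ^ ((3 : ℝ) / 2) := by
  intro y
  have hpos : ∀ s, 0 ≤ s → 0 < μ ^ 2 + s := fun s hs => by positivity
  rw [lap_comp_norm_sq (fun s hs => hasDerivAt_neg_log_add_sqrt hμ (hpos s hs)) y
      (hasDerivAt_neg_inv_sqrt_mul_add_sqrt hμ (hpos _ (sq_nonneg _))),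
    rpow_div_two_eq_sqrt _ (hpos _ (sq_nonneg _)).le]
  have hr : 0 < √(μ ^ 2 + ‖y‖ ^ 2) := sqrt_pos.2 (hpos _ (sq_nonneg _))
  have hy : ‖y‖ ^ 2 = √(μ ^ 2 + ‖y‖ ^ 2) ^ 2 - μ ^ 2 := by
    rw [sq_sqrt (hpos _ (sq_nonneg _)).le]; ring
  generalize √(μ ^ 2 + ‖y‖ ^ 2) = r at hr hy ⊢
  rw [hy, rpow_ofNat]
  field_simp
  ring
end

section
/- For every μ > 0 there exists a constant c > 0 such that for all y ∈ ℝ², e^{Ū_μ(y)} (1 + Ū_μ(y)⁴) ≤ c μ/(μ² + |y|²)^{3/2}, i.e. (8μ²/(μ² + |y|²)²) · (1 + log⁴(8μ²/(μ² + |y|²)²)) ≤ c μ/(μ² + |y|²)^{3/2}. -/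
/-!
Put `ρ = (μ² + |y|²)/μ² ≥ 1`. Then `e^{Ū_μ(y)} = 8/(μ²ρ²)`, `Ū_μ(y) = log(8/μ²) - 2 log ρ` and
`μ/(μ² + |y|²)^{3/2} = 1/(μ²ρ^{3/2})`, so the claim is `8(1 + Ū_μ(y)⁴) ≤ c √ρ`. This holds because
`log ρ` grows slower than any power of `ρ`: `log⁴ ρ ≤ 8⁴ √ρ`, the fourth power of `log ρ ≤ 8 ρ^{1/8}`.
-/

open Real

noncomputable def Ubar (μ : ℝ) (y : EuclideanSpace ℝ (Fin 2)) : ℝ :=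
  Real.log (8 * μ ^ 2 / (μ ^ 2 + ‖y‖ ^ 2) ^ 2)

lemma Real.log_pow_le_rpow {x ε : ℝ} {n : ℕ} (hx : 1 ≤ x) (hε : 0 < ε) (hn : n ≠ 0) :
    log x ^ n ≤ (n / ε) ^ n * x ^ ε := by
  have hδ : 0 < ε / n := by positivity
  have hlog : log x ≤ n / ε * x ^ (ε / n) := by
    calc log x ≤ x ^ (ε / n) / (ε / n) := log_le_rpow_div (by linarith) hδ
      _ = n / ε * x ^ (ε / n) := by field_simp
  calc log x ^ n ≤ (n / ε * x ^ (ε / n)) ^ n := by gcongr; exact log_nonneg hx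
    _ = (n / ε) ^ n * x ^ ε := by
      rw [mul_pow, ← rpow_mul_natCast (by linarith), div_mul_cancel₀ _ (by positivity)]

lemma one_add_sub_two_mul_log_pow_four_le (A : ℝ) {ρ : ℝ} (hρ : 1 ≤ ρ) :
    1 + (A - 2 * log ρ) ^ 4 ≤ (1 + 8 * A ^ 4 + 2 ^ 19) * ρ ^ (1 / 2 : ℝ) := by
  have hsplit : (A - 2 * log ρ) ^ 4 ≤ 8 * A ^ 4 + 2 ^ 7 * log ρ ^ 4 := by
    have := (even_two_mul 2).add_pow_le (a := A) (b := -(2 * log ρ))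
    norm_num at this
    linarith
  have hlog : log ρ ^ 4 ≤ 2 ^ 12 * ρ ^ (1 / 2 : ℝ) := by
    convert log_pow_le_rpow hρ (by norm_num : (0 : ℝ) < 1 / 2) (n := 4) (by norm_num) using 2
    norm_num
  have hroot : 1 ≤ ρ ^ (1 / 2 : ℝ) := one_le_rpow hρ (by norm_num)
  nlinarith [pow_nonneg (sq_nonneg A) 2]

lemma exp_Ubar {μ : ℝ} (hμ : μ ≠ 0) (y : EuclideanSpace ℝ (Fin 2)) :
    exp (Ubar μ y) = 8 * μ ^ 2 / (μ ^ 2 + ‖y‖ ^ 2) ^ 2 :=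
  exp_log (by positivity)

lemma Ubar_eq_log_sub {μ : ℝ} (hμ : μ ≠ 0) (y : EuclideanSpace ℝ (Fin 2)) :
    Ubar μ y = log (8 / μ ^ 2) - 2 * log ((μ ^ 2 + ‖y‖ ^ 2) / μ ^ 2) := by
  have hx : μ ^ 2 + ‖y‖ ^ 2 ≠ 0 := by positivity
  rw [Ubar, log_div (by positivity) (by positivity), log_div (by positivity) (by positivity),
    log_div hx (by positivity), log_mul (by positivity) (by positivity)]
  simp only [log_pow]
  push_cast
  ring

lemma sq_div_sq_mul_rpow_half {μ x : ℝ} (hμ : 0 < μ) (hx : 0 < x) :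
    μ ^ 2 / x ^ 2 * (x / μ ^ 2) ^ (1 / 2 : ℝ) = μ / x ^ (3 / 2 : ℝ) := by
  rw [div_rpow hx.le (by positivity), ← sqrt_eq_rpow (μ ^ 2), sqrt_sq hμ.le,
    show x ^ 2 = x ^ (3 / 2 : ℝ) * x ^ (1 / 2 : ℝ) by
      rw [← rpow_add hx]; norm_num]
  field_simp

/-- For every `μ > 0` there is `c > 0` with
`e^{Ū_μ(y)} (1 + Ū_μ(y)⁴) ≤ c μ/(μ² + |y|²)^{3/2}` for all `y ∈ ℝ²`. -/
theorem exp_Ubar_weight_bound (μ : ℝ) (hμ : 0 < μ) :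
    ∃ c : ℝ, 0 < c ∧ ∀ y : EuclideanSpace ℝ (Fin 2),
      Real.exp (Ubar μ y) * (1 + (Ubar μ y) ^ 4)
        ≤ c * μ / (μ ^ 2 + ‖y‖ ^ 2) ^ ((3 : ℝ) / 2) := by
  set A := log (8 / μ ^ 2)
  refine ⟨8 * (1 + 8 * A ^ 4 + 2 ^ 19), by positivity, fun y => ?_⟩
  set x := μ ^ 2 + ‖y‖ ^ 2
  have hx : 0 < x := by positivity
  have hρ : 1 ≤ x / μ ^ 2 := (one_le_div (by positivity)).2 (le_add_of_nonneg_right (by positivity))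
  calc exp (Ubar μ y) * (1 + Ubar μ y ^ 4)
      = 8 * (μ ^ 2 / x ^ 2) * (1 + (A - 2 * log (x / μ ^ 2)) ^ 4) := by
        rw [exp_Ubar hμ.ne', Ubar_eq_log_sub hμ.ne', mul_div_assoc]
    _ ≤ 8 * (μ ^ 2 / x ^ 2) * ((1 + 8 * A ^ 4 + 2 ^ 19) * (x / μ ^ 2) ^ (1 / 2 : ℝ)) := by
        gcongr
        exact one_add_sub_two_mul_log_pow_four_le A hρ
    _ = 8 * (1 + 8 * A ^ 4 + 2 ^ 19) * μ / x ^ ((3 : ℝ) / 2) := by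
        linear_combination (8 * (1 + 8 * A ^ 4 + 2 ^ 19)) * sq_div_sq_mul_rpow_half hμ hx
end

section
/- For every μ > 0 there exists a constant C > 0 (depending only on μ) such that the following holds: for all radii R₂ > R₁ ≥ 2, if ψ ∈ C²(A) ∩ C(Ā), where A = B(0,R₂) ∖ closure(B(0,R₁)) ⊂ ℝ², satisfies −Δψ(y) = μ/(μ² + |y|²)^{3/2} in A and ψ = 0 on ∂A, then sup_{A} |ψ| ≤ (C/R₁) · log R₂ / (log R₂ − log R₁). -/
/-!
In the plane `Δ (1/|y|) = 1/|y|³`, so the barrier `W = 2μ (1/R₁ - 1/|y|)` satisfies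
`-ΔW = 2μ/|y|³ > μ/(μ² + |y|²)^{3/2} = |Δψ|` on the annulus, and `W ≥ 0 = |ψ|` on its boundary.
A local minimum of a `C²` function has nonnegative Laplacian, so `W ∓ ψ`, whose Laplacian is
negative, attain their minima on the boundary; hence `|ψ| ≤ W ≤ 2μ/R₁`, and the logarithmic
factor is at least `1` because `R₁ > 1`.
-/

open Real

open Filter Topology Laplacian InnerProductSpace Metric

theorem IsLocalMin.deriv_deriv_nonneg {f : ℝ → ℝ} {a : ℝ} (h : IsLocalMin f a)
    (hc : ContinuousAt f a) : 0 ≤ deriv (deriv f) a := by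
  by_contra! hneg
  have hmax : IsLocalMax f a := isLocalMax_of_deriv_deriv_neg hneg h.deriv_eq_zero hc
  have hconst : f =ᶠ[𝓝 a] fun _ => f a := by
    filter_upwards [h, hmax] with y h₁ h₂ using le_antisymm h₂ h₁
  have hzero : deriv (deriv f) a = 0 := by
    rw [hconst.deriv.deriv_eq]
    simp
  exact hneg.ne hzero

section NormedSpace

variable {E F : Type*} [NormedAddCommGroup E] [NormedSpace ℝ E]
  [NormedAddCommGroup F] [NormedSpace ℝ F]

theorem iteratedFDeriv_two_apply_diag {f : E → F} {x : E} (hf : ContDiffAt ℝ 2 f x) (v : E) :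
    iteratedFDeriv ℝ 2 f x ![v, v] = fderiv ℝ (fun y => fderiv ℝ f y v) x v := by
  have hd : DifferentiableAt ℝ (fderiv ℝ f) x :=
    (hf.fderiv_right (by norm_num)).differentiableAt one_ne_zero
  rw [iteratedFDeriv_two_apply, fderiv_clm_apply hd (differentiableAt_const v)]
  simp

theorem IsLocalMin.fderiv_fderiv_apply_nonneg {u : E → ℝ} {x : E} (h : IsLocalMin u x)
    (hu : ContDiffAt ℝ 2 u x) (v : E) :
    0 ≤ fderiv ℝ (fun y => fderiv ℝ u y v) x v := by
  let line : ℝ → E := fun t => x + t • v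
  have hline : ∀ t, HasDerivAt line v t := fun t => by
    simpa only [one_smul] using ((hasDerivAt_id' t).smul_const v).const_add x
  have hline0 : line 0 = x := by simp [line]
  have hlim : Tendsto line (𝓝 0) (𝓝 x) := hline0 ▸ (hline 0).continuousAt.tendsto
  have hderiv : deriv (u ∘ line) =ᶠ[𝓝 0] fun t => fderiv ℝ u (line t) v := by
    filter_upwards [hlim.eventually (hu.eventually (by norm_num))] with t ht
    exact ((ht.differentiableAt two_ne_zero).hasFDerivAt.comp_hasDerivAt t (hline t)).deriv
  have hderiv2 : HasDerivAt (fun t => fderiv ℝ u (line t) v)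
      (fderiv ℝ (fun y => fderiv ℝ u y v) x v) 0 := by
    have hd : DifferentiableAt ℝ (fun y => fderiv ℝ u y v) (line 0) := by
      rw [hline0]
      exact ((hu.fderiv_right (by norm_num)).differentiableAt one_ne_zero).clm_apply
        (differentiableAt_const v)
    have := hd.hasFDerivAt.comp_hasDerivAt 0 (hline 0)
    rwa [hline0] at this
  have hcont : ContinuousAt line 0 := (hline 0).continuousAt
  have hmin : IsLocalMin (u ∘ line) 0 :=
    (hline0 ▸ h : IsLocalMin u (line 0)).comp_continuous hcont
  rw [← hderiv2.deriv, ← hderiv.deriv_eq]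
  exact hmin.deriv_deriv_nonneg
    ((hline0 ▸ hu.continuousAt : ContinuousAt u (line 0)).comp hcont)

end NormedSpace

section InnerProductSpace

variable {E : Type*} [NormedAddCommGroup E] [InnerProductSpace ℝ E]

theorem hasFDerivAt_norm_rpow_of_ne_zero (p : ℝ) {x : E} (hx : x ≠ 0) :
    HasFDerivAt (fun z : E => ‖z‖ ^ p) ((p * ‖x‖ ^ (p - 2)) • innerSL ℝ x) x := by
  convert ((hasStrictFDerivAt_norm_sq x).rpow_const (p := p / 2) (by simp [hx])).hasFDerivAt
    using 1
  · ext z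
    rw [← Real.rpow_natCast_mul (norm_nonneg z)]
    congr 1
    push_cast
    ring
  · rw [← Real.rpow_natCast_mul (norm_nonneg x), two_smul, ← two_smul ℝ, smul_smul]
    congr 1
    ring_nf

theorem contDiffAt_norm_rpow_of_ne_zero (p : ℝ) {x : E} (hx : x ≠ 0) {n : WithTop ℕ∞} :
    ContDiffAt ℝ n (fun z : E => ‖z‖ ^ p) x :=
  (contDiffAt_norm ℝ hx).rpow_const_of_ne (norm_ne_zero_iff.mpr hx)

theorem contDiffAt_norm_inv {x : E} (hx : x ≠ 0) {n : WithTop ℕ∞} :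
    ContDiffAt ℝ n (fun z : E => ‖z‖⁻¹) x :=
  (contDiffAt_norm ℝ hx).inv (norm_ne_zero_iff.mpr hx)

theorem fderiv_fderiv_norm_rpow_apply (p : ℝ) {x : E} (hx : x ≠ 0) (v : E) :
    fderiv ℝ (fun y => fderiv ℝ (fun z : E => ‖z‖ ^ p) y v) x v
      = p * (p - 2) * ‖x‖ ^ (p - 4) * ⟪x, v⟫_ℝ ^ 2 + p * ‖x‖ ^ (p - 2) * ‖v‖ ^ 2 := by
  have hfd : (fun y => fderiv ℝ (fun z : E => ‖z‖ ^ p) y v)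
      =ᶠ[𝓝 x] fun y => p * ‖y‖ ^ (p - 2) * innerSL ℝ v y := by
    filter_upwards [isOpen_compl_singleton.mem_nhds hx] with y hy
    rw [(hasFDerivAt_norm_rpow_of_ne_zero p hy).fderiv]
    simp only [smul_apply, coe_innerSL_apply, real_inner_comm, smul_eq_mul]
  have hd := (((hasFDerivAt_norm_rpow_of_ne_zero (p - 2) hx).const_mul p).fun_mul
    (innerSL ℝ v).hasFDerivAt)
  rw [hfd.fderiv_eq, hd.fderiv]
  have h4 : ‖x‖ ^ (p - 2 - 2) = ‖x‖ ^ (p - 4) := by ring_nf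
  simp only [add_apply, smul_apply, coe_innerSL_apply, real_inner_comm, h4,
    real_inner_self_eq_norm_sq, smul_eq_mul]
  ring

variable [FiniteDimensional ℝ E]

theorem laplacian_norm_rpow (p : ℝ) {x : E} (hx : x ≠ 0) :
    Δ (fun z : E => ‖z‖ ^ p) x = p * (p + Module.finrank ℝ E - 2) * ‖x‖ ^ (p - 2) := by
  have hnorm : 0 < ‖x‖ := norm_pos_iff.mpr hx
  rw [laplacian_eq_iteratedFDeriv_stdOrthonormalBasis]
  simp only [iteratedFDeriv_two_apply_diag (contDiffAt_norm_rpow_of_ne_zero p hx),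
    fderiv_fderiv_norm_rpow_apply p hx, Finset.sum_add_distrib, ← Finset.mul_sum]
  have hparseval : ∑ i, ⟪x, stdOrthonormalBasis ℝ E i⟫_ℝ ^ 2 = ‖x‖ ^ 2 := by
    rw [← real_inner_self_eq_norm_sq, ← (stdOrthonormalBasis ℝ E).sum_inner_mul_inner x x]
    simp_rw [sq, real_inner_comm x]
  have hunit : ∑ i, ‖stdOrthonormalBasis ℝ E i‖ ^ 2 = Module.finrank ℝ E := by
    simp [(stdOrthonormalBasis ℝ E).orthonormal.1]
  have hpow : ‖x‖ ^ (p - 4) * ‖x‖ ^ 2 = ‖x‖ ^ (p - 2) := by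
    rw [← Real.rpow_natCast, ← Real.rpow_add hnorm]
    ring_nf
  rw [hparseval, hunit]
  linear_combination p * (p - 2) * hpow

theorem IsLocalMin.laplacian_nonneg {u : E → ℝ} {x : E} (h : IsLocalMin u x)
    (hu : ContDiffAt ℝ 2 u x) : 0 ≤ Δ u x := by
  rw [laplacian_eq_iteratedFDeriv_stdOrthonormalBasis]
  refine Finset.sum_nonneg fun i _ => ?_
  rw [iteratedFDeriv_two_apply_diag hu]
  exact h.fderiv_fderiv_apply_nonneg hu _

theorem nonneg_of_laplacian_neg {U : Set E} (hU : IsOpen U) (hb : Bornology.IsBounded U)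
    {v : E → ℝ} (hv : ∀ x ∈ U, ContDiffAt ℝ 2 v x) (hvc : ContinuousOn v (closure U))
    (hΔ : ∀ x ∈ U, Δ v x < 0) (hfr : ∀ x ∈ frontier U, 0 ≤ v x) {x : E} (hx : x ∈ U) :
    0 ≤ v x := by
  obtain ⟨x₀, hx₀, hmin⟩ := hb.isCompact_closure.exists_isMinOn ⟨x, subset_closure hx⟩ hvc
  refine (hmin (subset_closure hx)).trans' ?_
  by_cases hx₀U : x₀ ∈ U
  · have hloc : IsLocalMin v x₀ :=
      hmin.isLocalMin (mem_of_superset (hU.mem_nhds hx₀U) subset_closure)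
    exact absurd (hloc.laplacian_nonneg (hv x₀ hx₀U)) (hΔ x₀ hx₀U).not_ge
  · exact hfr x₀ (hU.frontier_eq ▸ ⟨hx₀, hx₀U⟩)

theorem abs_le_of_abs_laplacian_lt {U : Set E} (hU : IsOpen U) (hb : Bornology.IsBounded U)
    {ψ W : E → ℝ} (hψ : ∀ x ∈ U, ContDiffAt ℝ 2 ψ x) (hW : ∀ x ∈ U, ContDiffAt ℝ 2 W x)
    (hψc : ContinuousOn ψ (closure U)) (hWc : ContinuousOn W (closure U))
    (hΔ : ∀ x ∈ U, |Δ ψ x| < -Δ W x) (hfr : ∀ x ∈ frontier U, |ψ x| ≤ W x)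
    {x : E} (hx : x ∈ U) : |ψ x| ≤ W x := by
  have hsub : 0 ≤ W x - ψ x := by
    refine nonneg_of_laplacian_neg hU hb (fun y hy => (hW y hy).sub (hψ y hy)) (hWc.sub hψc)
      (fun y hy => ?_) (fun y hy => ?_) hx
    · rw [show (fun z => W z - ψ z) = W - ψ from rfl, (hW y hy).laplacian_sub (hψ y hy)]
      linarith [neg_le_abs (Δ ψ y), hΔ y hy]
    · linarith [le_abs_self (ψ y), hfr y hy]
  have hadd : 0 ≤ W x + ψ x := by
    refine nonneg_of_laplacian_neg hU hb (fun y hy => (hW y hy).add (hψ y hy)) (hWc.add hψc)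
      (fun y hy => ?_) (fun y hy => ?_) hx
    · rw [show (fun z => W z + ψ z) = W + ψ from rfl, (hW y hy).laplacian_add (hψ y hy)]
      linarith [le_abs_self (Δ ψ y), hΔ y hy]
    · linarith [neg_abs_le (ψ y), hfr y hy]
  exact abs_le.mpr ⟨by linarith, by linarith⟩

end InnerProductSpace

section Plane

local notation "ℝ²" => EuclideanSpace ℝ (Fin 2)

theorem lap_eq_laplacian {u : ℝ² → ℝ} {x : ℝ²} (hu : ContDiffAt ℝ 2 u x) :
    lap u x = Δ u x := by
  simp [lap, laplacian_eq_iteratedFDeriv_orthonormalBasis u (EuclideanSpace.basisFun (Fin 2) ℝ),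
    iteratedFDeriv_two_apply_diag hu]

theorem laplacian_norm_inv {x : ℝ²} (hx : x ≠ 0) :
    Δ (fun z : ℝ² => ‖z‖⁻¹) x = (‖x‖ ^ 3)⁻¹ := by
  have h := laplacian_norm_rpow (-1) hx
  simp only [Real.rpow_neg_one, finrank_euclideanSpace_fin] at h
  rw [h, show (-1 : ℝ) - 2 = -(3 : ℕ) by norm_num, Real.rpow_neg (norm_nonneg x),
    Real.rpow_natCast]
  norm_num

theorem laplacian_const_sub_norm_inv (a b : ℝ) {x : ℝ²} (hx : x ≠ 0) :
    Δ (fun z : ℝ² => b * (a - ‖z‖⁻¹)) x = -(b / ‖x‖ ^ 3) := by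
  have hinv : ContDiffAt ℝ 2 (fun z : ℝ² => ‖z‖⁻¹) x := contDiffAt_norm_inv hx
  have hfun : (fun z : ℝ² => b * (a - ‖z‖⁻¹)) = b • ((fun _ => a) - fun z : ℝ² => ‖z‖⁻¹) := by
    ext z
    simp
  have hdiff : ContDiffAt ℝ 2 ((fun _ => a) - fun z : ℝ² => ‖z‖⁻¹) x :=
    contDiffAt_const.sub hinv
  rw [hfun, laplacian_smul b hdiff, contDiffAt_const.laplacian_sub hinv,
    laplacian_norm_inv hx, laplacian_const]
  simp [div_eq_mul_inv]

end Plane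

theorem div_sq_add_sq_rpow_lt {μ r : ℝ} (hμ : 0 < μ) (hr : 0 < r) :
    μ / (μ ^ 2 + r ^ 2) ^ ((3 : ℝ) / 2) < 2 * μ / r ^ 3 := by
  have hcube : (r ^ 2) ^ ((3 : ℝ) / 2) = r ^ 3 := by
    rw [← Real.rpow_natCast, ← Real.rpow_mul hr.le]
    norm_num
  have hmono : r ^ 3 ≤ (μ ^ 2 + r ^ 2) ^ ((3 : ℝ) / 2) :=
    hcube ▸ Real.rpow_le_rpow (by positivity) (by nlinarith) (by norm_num)
  calc μ / (μ ^ 2 + r ^ 2) ^ ((3 : ℝ) / 2) ≤ μ / r ^ 3 := by gcongr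
    _ < 2 * μ / r ^ 3 := by gcongr; linarith

theorem le_norm_of_mem_closure_ball_diff {E : Type*} [SeminormedAddCommGroup E] {R₁ R₂ : ℝ}
    {z : E}
    (hz : z ∈ closure (ball 0 R₂ \ closure (ball 0 R₁))) : R₁ ≤ ‖z‖ := by
  refine closure_minimal (fun w hw => ?_) (isClosed_le continuous_const continuous_norm) hz
  simpa using fun h => hw.2 (subset_closure h)

theorem le_mul_log_div_log_sub_log {c R₁ R₂ : ℝ} (hc : 0 ≤ c) (hR₁ : 1 < R₁)
    (hR₁₂ : R₁ < R₂) :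
    c ≤ c * Real.log R₂ / (Real.log R₂ - Real.log R₁) := by
  have hlog₁ : 0 < Real.log R₁ := Real.log_pos hR₁
  have hlog₁₂ : Real.log R₁ < Real.log R₂ := Real.log_lt_log (by linarith) hR₁₂
  rw [le_div_iff₀ (by linarith)]
  nlinarith

/-- For every `μ > 0` there is `C > 0` (depending only on `μ`) such that for all radii
`R₂ > R₁ ≥ 2`, any solution `ψ ∈ C²(A) ∩ C(Ā)` of `−Δψ = μ/(μ² + |y|²)^{3/2}` in the
annulus `A = B(0,R₂) ∖ closure B(0,R₁)` with `ψ = 0` on `∂A` satisfies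
`sup_A |ψ| ≤ (C/R₁) · log R₂ / (log R₂ − log R₁)`. -/
theorem annulus_barrier_estimate (μ : ℝ) (hμ : 0 < μ) :
    ∃ C : ℝ, 0 < C ∧ ∀ R₁ R₂ : ℝ, 2 ≤ R₁ → R₁ < R₂ →
      ∀ ψ : EuclideanSpace ℝ (Fin 2) → ℝ,
        ContDiffOn ℝ 2 ψ
          (Metric.ball (0 : EuclideanSpace ℝ (Fin 2)) R₂ \
            closure (Metric.ball (0 : EuclideanSpace ℝ (Fin 2)) R₁)) →
        ContinuousOn ψ
          (closure (Metric.ball (0 : EuclideanSpace ℝ (Fin 2)) R₂ \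
            closure (Metric.ball (0 : EuclideanSpace ℝ (Fin 2)) R₁))) →
        (∀ y ∈ Metric.ball (0 : EuclideanSpace ℝ (Fin 2)) R₂ \
            closure (Metric.ball (0 : EuclideanSpace ℝ (Fin 2)) R₁),
          -lap ψ y = μ / (μ ^ 2 + ‖y‖ ^ 2) ^ ((3 : ℝ) / 2)) →
        (∀ y ∈ frontier (Metric.ball (0 : EuclideanSpace ℝ (Fin 2)) R₂ \
            closure (Metric.ball (0 : EuclideanSpace ℝ (Fin 2)) R₁)),
          ψ y = 0) →
        ∀ y ∈ Metric.ball (0 : EuclideanSpace ℝ (Fin 2)) R₂ \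
            closure (Metric.ball (0 : EuclideanSpace ℝ (Fin 2)) R₁),
          |ψ y| ≤ (C / R₁) * Real.log R₂ / (Real.log R₂ - Real.log R₁) := by
  refine ⟨2 * μ, by positivity, fun R₁ R₂ hR₁ hR₁₂ ψ hψ hψc hpde hbdry y hy => ?_⟩
  set A := ball (0 : EuclideanSpace ℝ (Fin 2)) R₂ \ closure (ball 0 R₁)
  have hA : IsOpen A := isOpen_ball.sdiff isClosed_closure
  have hR₁_le : ∀ z ∈ closure A, R₁ ≤ ‖z‖ := fun z hz => le_norm_of_mem_closure_ball_diff hz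
  have hpos : ∀ z ∈ closure A, 0 < ‖z‖ := fun z hz => by linarith [hR₁_le z hz]
  set W := fun z : EuclideanSpace ℝ (Fin 2) => 2 * μ * (R₁⁻¹ - ‖z‖⁻¹)
  have hW : ∀ z ∈ closure A, ContDiffAt ℝ 2 W z := fun z hz =>
    contDiffAt_const.mul (contDiffAt_const.sub (contDiffAt_norm_inv (norm_pos_iff.mp (hpos z hz))))
  have hψ₂ : ∀ z ∈ A, ContDiffAt ℝ 2 ψ z := fun z hz => hψ.contDiffAt (hA.mem_nhds hz)
  have hΔ : ∀ z ∈ A, |Δ ψ z| < -Δ W z := fun z hz => by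
    have hz₀ := hpos z (subset_closure hz)
    rw [laplacian_const_sub_norm_inv _ _ (norm_pos_iff.mp hz₀), neg_neg,
      ← lap_eq_laplacian (hψ₂ z hz), ← abs_neg, hpde z hz, abs_of_pos (by positivity)]
    exact div_sq_add_sq_rpow_lt hμ hz₀
  have hfr : ∀ z ∈ frontier A, |ψ z| ≤ W z := fun z hz => by
    rw [hbdry z hz, abs_zero]
    exact mul_nonneg (by positivity) (sub_nonneg.mpr
      (inv_anti₀ (by linarith) (hR₁_le z (frontier_subset_closure hz))))
  calc |ψ y| ≤ W y :=
        abs_le_of_abs_laplacian_lt hA (isBounded_ball.subset Set.sdiff_subset) hψ₂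
          (fun z hz => hW z (subset_closure hz)) hψc
          (fun z hz => (hW z hz).continuousAt.continuousWithinAt) hΔ hfr hy
    _ ≤ 2 * μ / R₁ := by
      have := inv_nonneg.mpr (norm_nonneg y)
      rw [div_eq_mul_inv]
      nlinarith
    _ ≤ 2 * μ / R₁ * Real.log R₂ / (Real.log R₂ - Real.log R₁) :=
      le_mul_log_div_log_sub_log (by positivity) (by linarith) hR₁₂
end

section
/- There exists a constant C > 0 such that for every ε ∈ (0,1], the function f_ε(t) = t e^{t² + |t|^{1+ε}} is three times differentiable at every t ≠ 0 and |f_ε'''(t)| ≤ C (|t|^{ε−1} + t⁴) e^{t² + |t|^{1+ε}} for every t ≠ 0. -/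
/-!
On either side of the origin `|t|` is smooth, so `f_ε(t) = t e^{φ(t)}` with
`φ(t) = t² + |t|^{1+ε}` can be differentiated three times by the chain and product rules:
`f_ε''' = (3φ'' + tφ''' + 3φ'² + 3tφ'φ'' + tφ'³) e^φ`. Writing `v = |t|^{ε-1}`, one has
`|φ'| ≲ 1 + |t|`, `|φ''| ≲ 1 + v` and `|tφ'''| ≲ v`, uniformly in `ε ∈ (0,1]`. Every term of the
polynomial factor is then `≲ v + (1 + |t|)⁴`, and `(1 + |t|)⁴ ≲ 1 + t⁴ ≲ v + t⁴` because
`v ≥ 1` when `|t| ≤ 1`.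
-/

open Real

/-- The nonlinearity `f_ε(t) = t e^{t² + |t|^{1+ε}}`. -/
noncomputable def fEps (ε : ℝ) (t : ℝ) : ℝ :=
  t * Real.exp (t ^ 2 + |t| ^ (1 + ε))

theorem hasDerivAt_deriv_of_isOpen {𝕜 F : Type*} [NontriviallyNormedField 𝕜]
    [NormedAddCommGroup F] [NormedSpace 𝕜 F] {f f' f'' : 𝕜 → F} {U : Set 𝕜} (hU : IsOpen U)
    (hf : ∀ x ∈ U, HasDerivAt f (f' x) x) (hf' : ∀ x ∈ U, HasDerivAt f' (f'' x) x) :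
    ∀ x ∈ U, HasDerivAt (deriv f) (f'' x) x := fun x hx =>
  (hf' x hx).congr_of_eventuallyEq <|
    Filter.eventually_of_mem (hU.mem_nhds hx) fun y hy => (hf y hy).deriv

section MulExp

variable {h h₁ h₂ h₃ : ℝ → ℝ} {t : ℝ}

theorem hasDerivAt_mul_exp (hh : HasDerivAt h (h₁ t) t) :
    HasDerivAt (fun x => x * exp (h x)) ((1 + t * h₁ t) * exp (h t)) t := by
  refine ((hasDerivAt_id' t).mul hh.exp).congr_deriv ?_
  ring

theorem hasDerivAt_mul_exp_deriv (hh : HasDerivAt h (h₁ t) t) (hh₁ : HasDerivAt h₁ (h₂ t) t) :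
    HasDerivAt (fun x => (1 + x * h₁ x) * exp (h x))
      ((2 * h₁ t + t * h₂ t + t * h₁ t ^ 2) * exp (h t)) t := by
  refine ((((hasDerivAt_id' t).mul hh₁).const_add 1).mul hh.exp).congr_deriv ?_
  simp only [Pi.mul_apply]
  ring

theorem hasDerivAt_mul_exp_deriv2 (hh : HasDerivAt h (h₁ t) t) (hh₁ : HasDerivAt h₁ (h₂ t) t)
    (hh₂ : HasDerivAt h₂ (h₃ t) t) :
    HasDerivAt (fun x => (2 * h₁ x + x * h₂ x + x * h₁ x ^ 2) * exp (h x))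
      ((3 * h₂ t + t * h₃ t + 3 * h₁ t ^ 2 + 3 * t * h₁ t * h₂ t + t * h₁ t ^ 3) * exp (h t))
      t := by
  refine (((hh₁.const_mul 2 |>.add ((hasDerivAt_id' t).mul hh₂)).add
    ((hasDerivAt_id' t).mul (hh₁.pow 2))).mul hh.exp).congr_deriv ?_
  simp only [Pi.mul_apply, Pi.add_apply, Pi.pow_apply]
  ring

theorem deriv_deriv_deriv_mul_exp {U : Set ℝ} (hU : IsOpen U)
    (hh : ∀ x ∈ U, HasDerivAt h (h₁ x) x) (hh₁ : ∀ x ∈ U, HasDerivAt h₁ (h₂ x) x)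
    (hh₂ : ∀ x ∈ U, HasDerivAt h₂ (h₃ x) x) (ht : t ∈ U) :
    (DifferentiableAt ℝ (fun x => x * exp (h x)) t ∧
      DifferentiableAt ℝ (deriv fun x => x * exp (h x)) t ∧
      DifferentiableAt ℝ (deriv (deriv fun x => x * exp (h x))) t) ∧
    deriv (deriv (deriv fun x => x * exp (h x))) t =
      (3 * h₂ t + t * h₃ t + 3 * h₁ t ^ 2 + 3 * t * h₁ t * h₂ t + t * h₁ t ^ 3) * exp (h t) := by
  have d₁ := fun x hx => hasDerivAt_mul_exp (hh x hx)
  have d₂ := hasDerivAt_deriv_of_isOpen hU d₁ fun x hx =>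
    hasDerivAt_mul_exp_deriv (hh x hx) (hh₁ x hx)
  have d₃ := hasDerivAt_deriv_of_isOpen hU d₂ fun x hx =>
    hasDerivAt_mul_exp_deriv2 (hh x hx) (hh₁ x hx) (hh₂ x hx)
  exact ⟨⟨(d₁ t ht).differentiableAt, (d₂ t ht).differentiableAt, (d₃ t ht).differentiableAt⟩,
    (d₃ t ht).deriv⟩

end MulExp

section AbsRpow

variable {t : ℝ}

theorem rpow_sub_two_mul_sq {x : ℝ} (hx : x ≠ 0) (p : ℝ) : x ^ (p - 2) * x ^ 2 = x ^ p := by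
  rw [← rpow_add_natCast hx]
  norm_num

theorem hasDerivAt_abs_rpow_of_ne_zero (q : ℝ) (ht : t ≠ 0) :
    HasDerivAt (fun x => |x| ^ q) (q * |t| ^ (q - 2) * t) t := by
  refine ((hasDerivAt_abs ht).rpow_const (Or.inl (abs_ne_zero.mpr ht))).congr_deriv ?_
  rw [show q - 1 = q - 2 + 1 by ring, rpow_add_one (abs_ne_zero.mpr ht)]
  linear_combination q * |t| ^ (q - 2) * sign_mul_abs t

theorem hasDerivAt_abs_rpow_mul_self (q : ℝ) (ht : t ≠ 0) :
    HasDerivAt (fun x => |x| ^ q * x) ((q + 1) * |t| ^ q) t := by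
  refine ((hasDerivAt_abs_rpow_of_ne_zero q ht).mul (hasDerivAt_id' t)).congr_deriv ?_
  have := rpow_sub_two_mul_sq (abs_ne_zero.mpr ht) q
  rw [sq_abs] at this
  linear_combination q * this

end AbsRpow

theorem rpow_le_one_add_self {a ε : ℝ} (ha : 0 ≤ a) (hε0 : 0 ≤ ε) (hε1 : ε ≤ 1) :
    a ^ ε ≤ 1 + a := by
  rcases le_total a 1 with h | h
  · linarith [rpow_le_one ha h hε0]
  · have := rpow_le_rpow_of_exponent_le h hε1
    rw [rpow_one] at this
    linarith

theorem abs_mul_abs_rpow_sub_one_le {t ε : ℝ} (hε0 : 0 ≤ ε) (hε1 : ε ≤ 1) (ht : t ≠ 0) :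
    |t| * |t| ^ (ε - 1) ≤ 1 + |t| := by
  rw [mul_comm, ← rpow_add_one (abs_ne_zero.mpr ht), sub_add_cancel]
  exact rpow_le_one_add_self (abs_nonneg t) hε0 hε1

theorem one_le_abs_rpow_sub_one_add_pow_four {t ε : ℝ} (ht : t ≠ 0) (hε : ε ≤ 1) :
    1 ≤ |t| ^ (ε - 1) + t ^ 4 := by
  have ha := abs_pos.mpr ht
  rw [← (show Even 4 by decide).pow_abs]
  rcases le_total |t| 1 with h | h
  · linarith [one_le_rpow_of_pos_of_le_one_of_nonpos ha h (by linarith : ε - 1 ≤ 0),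
      pow_nonneg ha.le 4]
  · linarith [one_le_pow₀ (n := 4) h, rpow_nonneg ha.le (ε - 1)]

theorem one_add_pow_four_le (a : ℝ) : (1 + a) ^ 4 ≤ 8 * (1 + a ^ 4) := by
  nlinarith [sq_nonneg (a - 1), sq_nonneg (a ^ 2 - 1), sq_nonneg (a + 1)]

theorem abs_thirdDeriv_coeff_le {t v H₁ H₂ K : ℝ} (hv : 0 ≤ v) (hv₁ : 1 ≤ v + t ^ 4)
    (htv : |t| * v ≤ 1 + |t|) (hH₁ : |H₁| ≤ 4 * (1 + |t|)) (hH₂ : |H₂| ≤ 2 * (1 + v))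
    (hK : |K| ≤ 2 * v) :
    |3 * H₂ + K + 3 * H₁ ^ 2 + 3 * t * H₁ * H₂ + t * H₁ ^ 3| ≤ 2700 * (v + t ^ 4) := by
  set M := 1 + |t| with hM
  have hM1 : 1 ≤ M := by linarith [abs_nonneg t]
  have hH₂t : |t| * |H₂| ≤ 4 * M := by nlinarith [abs_nonneg t]
  have b₁ : |3 * H₂| ≤ 6 * (1 + v) := by
    rw [abs_mul, abs_of_pos three_pos]; linarith
  have b₃ : |3 * H₁ ^ 2| ≤ 48 * M ^ 2 := calc
    |3 * H₁ ^ 2| = 3 * |H₁| ^ 2 := by rw [abs_mul, abs_pow, abs_of_pos three_pos]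
    _ ≤ 3 * (4 * M) ^ 2 := by gcongr
    _ = 48 * M ^ 2 := by ring
  have b₄ : |3 * t * H₁ * H₂| ≤ 48 * M ^ 2 := calc
    |3 * t * H₁ * H₂| = 3 * |H₁| * (|t| * |H₂|) := by
      rw [abs_mul, abs_mul, abs_mul, abs_of_pos three_pos]; ring
    _ ≤ 3 * (4 * M) * (4 * M) := by gcongr
    _ = 48 * M ^ 2 := by ring
  have b₅ : |t * H₁ ^ 3| ≤ 64 * M ^ 4 := calc
    |t * H₁ ^ 3| = |t| * |H₁| ^ 3 := by rw [abs_mul, abs_pow]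
    _ ≤ M * (4 * M) ^ 3 := by gcongr; linarith
    _ = 64 * M ^ 4 := by ring
  have hM4 : M ^ 4 ≤ 16 * (v + t ^ 4) := by
    have := one_add_pow_four_le |t|
    rw [← hM, (show Even 4 by decide).pow_abs] at this
    linarith
  have hM2 : M ^ 2 ≤ M ^ 4 := pow_le_pow_right₀ hM1 (by norm_num)
  have hM0 : 1 ≤ M ^ 2 := one_le_pow₀ hM1
  have ht4 : 0 ≤ t ^ 4 := by positivity
  rw [abs_le] at b₁ b₃ b₄ b₅ hK ⊢
  constructor <;> linarith

namespace fEps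

variable {ε t : ℝ}

noncomputable def exponent (ε t : ℝ) : ℝ := t ^ 2 + |t| ^ (1 + ε)

noncomputable def exponentDeriv (ε t : ℝ) : ℝ := 2 * t + (1 + ε) * (|t| ^ (ε - 1) * t)

noncomputable def exponentDeriv2 (ε t : ℝ) : ℝ := 2 + (1 + ε) * ε * |t| ^ (ε - 1)

noncomputable def exponentDeriv3 (ε t : ℝ) : ℝ := (1 + ε) * ε * (ε - 1) * |t| ^ (ε - 3) * t

theorem eq_mul_exp_exponent (ε : ℝ) : fEps ε = fun x => x * exp (exponent ε x) := rfl

theorem hasDerivAt_exponent (ε : ℝ) (ht : t ≠ 0) :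
    HasDerivAt (exponent ε) (exponentDeriv ε t) t := by
  refine ((hasDerivAt_pow 2 t).add (hasDerivAt_abs_rpow_of_ne_zero (1 + ε) ht)).congr_deriv ?_
  rw [exponentDeriv, show 1 + ε - 2 = ε - 1 by ring]
  ring

theorem hasDerivAt_exponentDeriv (ε : ℝ) (ht : t ≠ 0) :
    HasDerivAt (exponentDeriv ε) (exponentDeriv2 ε t) t := by
  refine (((hasDerivAt_id' t).const_mul 2).add
    ((hasDerivAt_abs_rpow_mul_self (ε - 1) ht).const_mul (1 + ε))).congr_deriv ?_
  rw [exponentDeriv2]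
  ring

theorem hasDerivAt_exponentDeriv2 (ε : ℝ) (ht : t ≠ 0) :
    HasDerivAt (exponentDeriv2 ε) (exponentDeriv3 ε t) t := by
  refine (((hasDerivAt_abs_rpow_of_ne_zero (ε - 1) ht).const_mul ((1 + ε) * ε)).const_add
    2).congr_deriv ?_
  rw [exponentDeriv3, show ε - 1 - 2 = ε - 3 by ring]
  ring

theorem abs_exponentDeriv_le (hε0 : 0 ≤ ε) (hε1 : ε ≤ 1) (ht : t ≠ 0) :
    |exponentDeriv ε t| ≤ 4 * (1 + |t|) := calc
  |exponentDeriv ε t| ≤ |2 * t| + |(1 + ε) * (|t| ^ (ε - 1) * t)| := abs_add_le _ _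
  _ = 2 * |t| + (1 + ε) * (|t| * |t| ^ (ε - 1)) := by
    rw [abs_mul, abs_mul, abs_mul, abs_of_nonneg (rpow_nonneg (abs_nonneg t) _),
      abs_of_pos two_pos, abs_of_pos (by linarith : (0 : ℝ) < 1 + ε)]
    ring
  _ ≤ 2 * |t| + 2 * (1 + |t|) := by
    gcongr
    · linarith
    · exact abs_mul_abs_rpow_sub_one_le hε0 hε1 ht
  _ ≤ 4 * (1 + |t|) := by linarith

theorem abs_exponentDeriv2_le (hε0 : 0 ≤ ε) (hε1 : ε ≤ 1) :
    |exponentDeriv2 ε t| ≤ 2 * (1 + |t| ^ (ε - 1)) := by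
  have hv := rpow_nonneg (abs_nonneg t) (ε - 1)
  have hc : (1 + ε) * ε ≤ 2 := by nlinarith
  rw [exponentDeriv2, abs_of_nonneg (by positivity)]
  nlinarith

theorem abs_mul_exponentDeriv3_le (hε0 : 0 ≤ ε) (hε1 : ε ≤ 1) (ht : t ≠ 0) :
    |t * exponentDeriv3 ε t| ≤ 2 * |t| ^ (ε - 1) := by
  have hv := rpow_nonneg (abs_nonneg t) (ε - 1)
  have hpow : t * exponentDeriv3 ε t = (1 + ε) * ε * (ε - 1) * |t| ^ (ε - 1) := by
    rw [exponentDeriv3, ← rpow_sub_two_mul_sq (abs_ne_zero.mpr ht) (ε - 1), sq_abs,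
      show ε - 1 - 2 = ε - 3 by ring]
    ring
  have hc : |(1 + ε) * ε * (ε - 1)| ≤ 2 := by
    rw [abs_le]; constructor <;> nlinarith [mul_nonneg hε0 hε0]
  rw [hpow, abs_mul, abs_of_nonneg hv]
  exact mul_le_mul_of_nonneg_right hc hv

end fEps

/-- There is `C > 0` such that for every `ε ∈ (0,1]`, `f_ε` is three times differentiable
at every `t ≠ 0` and `|f_ε'''(t)| ≤ C (|t|^{ε−1} + t⁴) e^{t² + |t|^{1+ε}}` for `t ≠ 0`. -/
theorem third_deriv_fEps_bound :
    ∃ C : ℝ, 0 < C ∧ ∀ ε ∈ Set.Ioc (0 : ℝ) 1, ∀ t : ℝ, t ≠ 0 →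
      (DifferentiableAt ℝ (fEps ε) t ∧ DifferentiableAt ℝ (deriv (fEps ε)) t ∧
        DifferentiableAt ℝ (deriv (deriv (fEps ε))) t) ∧
      |deriv (deriv (deriv (fEps ε))) t|
        ≤ C * (|t| ^ (ε - 1) + t ^ 4) * Real.exp (t ^ 2 + |t| ^ (1 + ε)) := by
  refine ⟨2700, by norm_num, fun ε ⟨hε0, hε1⟩ t ht => ?_⟩
  obtain ⟨hdiff, hformula⟩ := deriv_deriv_deriv_mul_exp isOpen_ne
    (fun x hx => fEps.hasDerivAt_exponent ε hx) (fun x hx => fEps.hasDerivAt_exponentDeriv ε hx)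
    (fun x hx => fEps.hasDerivAt_exponentDeriv2 ε hx) (show t ∈ {x | x ≠ 0} from ht)
  rw [fEps.eq_mul_exp_exponent]
  refine ⟨hdiff, ?_⟩
  rw [hformula, abs_mul, abs_exp]
  have hpoly := abs_thirdDeriv_coeff_le (t := t) (rpow_nonneg (abs_nonneg t) (ε - 1))
    (one_le_abs_rpow_sub_one_add_pow_four ht hε1)
    (abs_mul_abs_rpow_sub_one_le hε0.le hε1 ht) (fEps.abs_exponentDeriv_le hε0.le hε1 ht)
    (fEps.abs_exponentDeriv2_le hε0.le hε1) (fEps.abs_mul_exponentDeriv3_le hε0.le hε1 ht)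
  exact mul_le_mul_of_nonneg_right hpoly (exp_pos _).le
end
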